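/- Fix a field k and let M be a smooth k[I]-module that is locally of finite length (every cyclic k[I]-submodule is finite-dimensional over k). For n ≥ 0 set G_n(M) = M^{I_{>n}} ∩ 𝔞_n M, with the convention 𝔞_0 M = M. Then M admits a canonical grading with these pieces: (1) M is the internal direct sum M = ⨁_{n ≥ 0} G_n(M); (2) for every σ ∈ I and every n, σ · G_n(M) ⊆ G_{σ(n)}(M) (with the convention σ(0) = 0); and (3) if σ ∈ I satisfies σ(n) = n, then σ acts as the identity on G_n(M). -/

import Mathlib

open scoped Classical

noncomputable section

/-- The increasing monoid `I`: the submonoid of `Function.End ℕ+` (functions under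
composition) consisting of strictly increasing functions `σ : ℕ+ → ℕ+` such that
`σ n = n + ℓ` for some `ℓ` and all sufficiently large `n`. -/
def IncMonoid : Submonoid (Function.End ℕ+) where
  carrier := {f | StrictMono f ∧ ∃ (l : ℕ) (N : ℕ+), ∀ n : ℕ+, N ≤ n → ((f n : ℕ) = (n : ℕ) + l)}
  one_mem' := ⟨fun _ _ h => h, 0, 1, fun n _ => by show ((n : ℕ+) : ℕ) = (n : ℕ) + 0; omega⟩
  mul_mem' := by
    rintro f g ⟨hf1, lf, Nf, hf2⟩ ⟨hg1, lg, Ng, hg2⟩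
    refine ⟨hf1.comp hg1, lg + lf, max Nf Ng, fun n hn => ?_⟩
    have h1 : (g n : ℕ) = (n : ℕ) + lg := hg2 n (le_trans (le_max_right _ _) hn)
    have h2 : Nf ≤ g n := by
      rw [← PNat.coe_le_coe, h1]
      have : (Nf : ℕ) ≤ (n : ℕ) := (PNat.coe_le_coe _ _).2 (le_trans (le_max_left _ _) hn)
      omega
    have h3 := hf2 (g n) h2
    show ((f (g n) : ℕ)) = (n : ℕ) + (lg + lf)
    omega

/-- The increasing monoid, as a type. -/
abbrev IncM : Type := IncMonoid

theorem IncM.strictMono (σ : IncM) : StrictMono σ.1 := σ.2.1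

theorem IncM.le_apply (σ : IncM) (n : ℕ+) : n ≤ σ.1 n := by
  induction n using PNat.recOn with
  | one => exact (σ.1 1).one_le
  | succ n ih =>
      have h2 : σ.1 n < σ.1 (n + 1) := σ.strictMono (by rw [← PNat.coe_lt_coe]; push_cast; omega)
      rw [← PNat.coe_le_coe] at *
      rw [← PNat.coe_lt_coe] at h2
      push_cast at *
      omega

/-- The underlying function of the generator `α_k`. -/
def alphaFun (k : ℕ+) : Function.End ℕ+ := fun n => if n < k then n else n + 1

theorem alphaFun_strictMono (k : ℕ+) : StrictMono (alphaFun k) := by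
  intro a b hab
  unfold alphaFun
  split_ifs with h1 h2 <;>
    rw [← PNat.coe_lt_coe] at * <;> push_cast at * <;> omega

theorem alphaFun_mem (k : ℕ+) : alphaFun k ∈ IncMonoid := by
  refine ⟨alphaFun_strictMono k, 1, k, fun n hn => ?_⟩
  unfold alphaFun
  rw [if_neg (not_lt.2 hn)]
  push_cast
  ring

/-- The generator `α_k` of the increasing monoid (`k ≥ 1`). -/
def alpha (k : ℕ+) : IncM := ⟨alphaFun k, alphaFun_mem k⟩

/-- The submonoid `I_{≥ n}` of `I` generated by the `α_i` with `i ≥ n`. -/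
def Iges (n : ℕ+) : Submonoid IncM := Submonoid.closure (alpha '' Set.Ici n)

/-- The submonoid `I_{> n}` of `I` generated by the `α_i` with `i > n`. -/
def Igt (n : ℕ) : Submonoid IncM := Submonoid.closure {s | ∃ i : ℕ+, n < (i : ℕ) ∧ s = alpha i}

/-- The monoid algebra `k[I]` of the increasing monoid. -/
abbrev IncAlg (k : Type*) [Field k] : Type _ := MonoidAlgebra k IncM

/-- The image of `σ ∈ I` in the monoid algebra `k[I]`. -/
abbrev ofInc (k : Type*) [Field k] (σ : IncM) : IncAlg k := MonoidAlgebra.of k IncM σ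

/-- A `k[I]`-module is smooth if every vector is fixed by some `I_{>n}`. -/
def IsSmoothMod (k : Type*) [Field k] (M : Type*) [AddCommMonoid M]
    [Module (IncAlg k) M] : Prop :=
  ∀ x : M, ∃ n : ℕ, ∀ σ ∈ Igt n, ofInc k σ • x = x

/-! ### The principal modules `A^r` -/

/-- Index set for the basis of the principal module `A^r`:
strictly increasing `r`-tuples of positive integers. -/
def Idx (r : ℕ) : Type := {v : Fin r → ℕ+ // StrictMono v}

/-- The action of `σ ∈ I` on the index set of `A^r`. -/
def idxAct {r : ℕ} (σ : IncM) (t : Idx r) : Idx r :=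
  ⟨σ.1 ∘ t.1, (IncM.strictMono σ).comp t.2⟩

/-- The representation of the increasing monoid on the principal module `A^r`. -/
def prinRep (k : Type*) [Field k] (r : ℕ) : Representation k IncM (Idx r →₀ k) where
  toFun σ := Finsupp.lmapDomain k k (idxAct σ)
  map_one' := LinearMap.ext fun v => by
    have h : (idxAct (1 : IncM) : Idx r → Idx r) = id := funext fun t => rfl
    simp [Finsupp.lmapDomain_apply, h, Finsupp.mapDomain_id]
  map_mul' := fun σ τ => LinearMap.ext fun v => by
    have h : (idxAct (σ * τ) : Idx r → Idx r) = (idxAct σ) ∘ (idxAct τ) :=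
      funext fun t => rfl
    show Finsupp.lmapDomain k k (idxAct (σ * τ)) v =
      Finsupp.lmapDomain k k (idxAct σ) (Finsupp.lmapDomain k k (idxAct τ) v)
    simp [Finsupp.lmapDomain_apply, h, Finsupp.mapDomain_comp]

/-- The principal module `A^r`, as a module over the monoid algebra `k[I]`. -/
abbrev PrinMod (k : Type*) [Field k] (r : ℕ) : Type _ := (prinRep k r).asModule

/-- The basis vector `e_t` of the principal module `A^r`. -/
def ePrin (k : Type*) [Field k] {r : ℕ} (t : Idx r) : PrinMod k r :=
  (prinRep k r).asModuleEquiv.symm (Finsupp.single t 1)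

/-- The tuple `(1, 2, …, r)` indexing the canonical generator `e_{1,…,r}` of `A^r`. -/
def iotaIdx (r : ℕ) : Idx r :=
  ⟨fun i => ⟨(i : ℕ) + 1, Nat.succ_pos _⟩, fun a b h => by
    exact (PNat.coe_lt_coe _ _).1 (show (a : ℕ) + 1 < (b : ℕ) + 1 from Nat.succ_lt_succ h)⟩

/-! ### The simple modules `B^n` -/

/-- `σ ∈ I` fixes the natural number `n`, with the convention `σ 0 = 0`. -/
def fixesNat (σ : IncM) (n : ℕ) : Prop := ∀ h : 0 < n, σ.1 ⟨n, h⟩ = ⟨n, h⟩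

theorem fixesNat_mul (σ τ : IncM) (n : ℕ) :
    fixesNat (σ * τ) n ↔ fixesNat σ n ∧ fixesNat τ n := by
  rcases Nat.eq_zero_or_pos n with h0 | h0
  · subst h0
    constructor
    · exact fun _ => ⟨fun h => absurd h (lt_irrefl 0), fun h => absurd h (lt_irrefl 0)⟩
    · exact fun _ h => absurd h (lt_irrefl 0)
  · set p : ℕ+ := ⟨n, h0⟩
    have happ : ∀ h : 0 < n, (σ * τ).1 ⟨n, h⟩ = σ.1 (τ.1 ⟨n, h⟩) := fun _ => rfl
    constructor
    · intro h
      have hfix : σ.1 (τ.1 p) = p := h h0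
      have h1 : p ≤ τ.1 p := τ.le_apply p
      have h2 : τ.1 p ≤ σ.1 (τ.1 p) := σ.le_apply _
      have hτp : τ.1 p = p := le_antisymm (h2.trans_eq hfix) h1
      have hσp : σ.1 p = p := by rw [hτp] at hfix; exact hfix
      exact ⟨fun _ => hσp, fun _ => hτp⟩
    · rintro ⟨hσ, hτ⟩ h
      rw [happ h]
      have := hτ h0
      rw [this, hσ h0]

/-- The representation of the increasing monoid on the simple module `B^n`:
`σ` acts by the identity if `σ(n) = n` (with `σ(0) = 0`) and by `0` otherwise. -/
def bRep (k : Type*) [Field k] (n : ℕ) : Representation k IncM k where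
  toFun σ := if fixesNat σ n then 1 else 0
  map_one' := by
    rw [if_pos]
    intro h
    rfl
  map_mul' := fun σ τ => by
    by_cases hσ : fixesNat σ n
    · by_cases hτ : fixesNat τ n
      · rw [if_pos ((fixesNat_mul σ τ n).2 ⟨hσ, hτ⟩), if_pos hσ, if_pos hτ, one_mul]
      · rw [if_neg (fun h => hτ ((fixesNat_mul σ τ n).1 h).2), if_pos hσ, if_neg hτ, one_mul]
    · by_cases hτ : fixesNat τ n
      · rw [if_neg (fun h => hσ ((fixesNat_mul σ τ n).1 h).1), if_neg hσ, if_pos hτ, mul_one]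
      · rw [if_neg (fun h => hσ ((fixesNat_mul σ τ n).1 h).1), if_neg hσ, if_neg hτ, mul_zero]

/-- The simple module `B^n`, as a module over the monoid algebra `k[I]`. -/
abbrev BMod (k : Type*) [Field k] (n : ℕ) : Type _ := (bRep k n).asModule

/-- The set of elements `(σ - 1) · x` of `M` with `σ ∈ I_{≥ n}`, `x ∈ M`. -/
def augSet (k : Type*) (M : Type*) [Field k] [AddCommGroup M] [Module (IncAlg k) M]
    (n : ℕ+) : Set M :=
  {m | ∃ σ ∈ Iges n, ∃ x : M, m = ofInc k σ • x - x}

/-- `𝔞_n M`: the span of the elements `(σ - 1) · x` with `σ ∈ I_{≥ n}`, `x ∈ M`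
(since this set of elements is stable under scaling by `k`, its `k`-span coincides
with the additive subgroup it generates). -/
def augGrp (k : Type*) (M : Type*) [Field k] [AddCommGroup M] [Module (IncAlg k) M]
    (n : ℕ+) : AddSubgroup M :=
  AddSubgroup.closure (augSet k M n)

/-- The additive subgroup `M^{I_{> n}}` of `I_{> n}`-invariant vectors of `M`. -/
def invGrp (k : Type*) (M : Type*) [Field k] [AddCommGroup M] [Module (IncAlg k) M]
    (S : Submonoid IncM) : AddSubgroup M where
  carrier := {x | ∀ σ ∈ S, ofInc k σ • x = x}
  add_mem' := by
    intro a b ha hb σ hσ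
    rw [smul_add, ha σ hσ, hb σ hσ]
  zero_mem' := fun σ _ => smul_zero _
  neg_mem' := by
    intro a ha σ hσ
    rw [smul_neg, ha σ hσ]

/-- The `n`-th canonical graded piece `G_n(M) = M^{I_{>n}} ∩ 𝔞_n M`, with the
convention `𝔞_0 M = M`. -/
def grPiece (k : Type*) (M : Type*) [Field k] [AddCommGroup M] [Module (IncAlg k) M]
    (n : ℕ) : AddSubgroup M :=
  invGrp k M (Igt n) ⊓ (if h : 0 < n then augGrp k M ⟨n, h⟩ else ⊤)

/-- The application of `σ ∈ I` to a natural number, with the convention `σ(0)=0`. -/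
def extApply (σ : IncM) (n : ℕ) : ℕ :=
  if h : 0 < n then (σ.1 ⟨n, h⟩ : ℕ) else 0

/-!
The generators satisfy `α_{j+1} α_i = α_i α_j` for `i ≤ j`, hence `α_c^r σ = τ α_c^r` with
`τ ∈ I_{≥ c+r}` whenever `σ ∈ I_{≥ c}`. An element of `I` fixing `1, …, n` lies in `I_{>n}`: peel
off `α_k` on the left, `k` the least moved point, and induct on the eventual shift. In particular
`I` is generated by the `α_i`, and equivariance of the grading is checked on generators.

In a locally finite smooth module every cyclic submodule is fixed by some `I_{>N}`, so
`α_c^R (σ - 1) y = (τ - 1) α_c^R y = 0` for `R ≫ 0`: high powers of `α_p` kill `𝔞_p M` and fix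
`M^{I_{>n}}` for `n < p`, which makes the pieces independent. Conversely, if `z` is fixed by
`I_{>n+1}` and `R ≫ 0`, then `e = α_{n+1}^R z` is fixed by `I_{>n}` and `z - e ∈ G_{n+1}(M)`, so
the pieces span by induction on `n`.
-/

theorem iSupIndep_of_disjoint_iSup_lt {α ι : Type*} [CompleteLattice α] [IsModularLattice α]
    [IsCompactlyGenerated α] [LinearOrder ι] {f : ι → α}
    (h : ∀ i, Disjoint (f i) (⨆ j < i, f j)) : iSupIndep f := by
  refine iSupIndep_iff_supIndep.2 fun s => ?_
  induction s using Finset.induction_on_max with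
  | empty => exact Finset.supIndep_empty f
  | insert i s hs ih =>
    exact ih.insert <| (h i).mono_right <| Finset.sup_le fun j hj => le_biSup f (hs j hj)

theorem DirectSum.isInternal_addSubgroup_of_disjoint_iSup_lt {ι A : Type*} [LinearOrder ι]
    [AddCommGroup A] {G : ι → AddSubgroup A} (hd : ∀ i, Disjoint (G i) (⨆ j < i, G j))
    (hs : ⨆ i, G i = ⊤) : DirectSum.IsInternal G := by
  let e := AddSubgroup.toIntSubmodule (M := A)
  refine DirectSum.isInternal_submodule_of_iSupIndep_of_iSup_eq_top (A := fun i => e (G i))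
    (iSupIndep_of_disjoint_iSup_lt fun i => ?_) ?_
  · simpa only [← e.map_iSup, disjoint_map_orderIso_iff] using hd i
  · rw [← e.map_iSup, hs, e.map_top]

lemma alpha_apply (i m : ℕ+) : (alpha i).1 m = if m < i then m else m + 1 := rfl

lemma alpha_succ_mul_alpha {i j : ℕ+} (h : i ≤ j) :
    alpha (j + 1) * alpha i = alpha i * alpha j := by
  refine Subtype.ext (funext fun m => ?_)
  change (alpha (j + 1)).1 ((alpha i).1 m) = (alpha i).1 ((alpha j).1 m)
  simp only [alpha_apply]
  split_ifs <;> simp_all only [← PNat.coe_lt_coe, ← PNat.coe_le_coe, ← PNat.coe_inj, PNat.add_coe,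
    PNat.one_coe] <;> omega

lemma alpha_pow_mul_alpha {c j j' : ℕ+} {r : ℕ} (hcj : c ≤ j) (hj' : (j' : ℕ) = j + r) :
    alpha c ^ r * alpha j = alpha j' * alpha c ^ r := by
  induction r generalizing j with
  | zero => simp [PNat.coe_injective hj']
  | succ r ih =>
    have hj'' : (j' : ℕ) = (j + 1 : ℕ+) + r := by rw [hj', PNat.add_coe, PNat.one_coe]; omega
    rw [pow_succ, mul_assoc, ← alpha_succ_mul_alpha hcj, ← mul_assoc,
      ih (hcj.trans (PNat.lt_add_right j 1).le) hj'', mul_assoc]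

lemma alpha_mul_alpha_pow {c j : ℕ+} {r : ℕ} (hcj : c ≤ j) (hjr : (j : ℕ) ≤ c + r) :
    alpha j * alpha c ^ r = alpha c ^ (r + 1) := by
  rw [← PNat.coe_le_coe] at hcj
  obtain ⟨t, s, rfl, hj⟩ : ∃ t s, r = t + s ∧ (j : ℕ) = c + t :=
    ⟨j - c, r - (j - c), by omega, by omega⟩
  rw [pow_add, ← mul_assoc, ← alpha_pow_mul_alpha le_rfl hj, ← pow_succ, ← pow_add, add_right_comm]

lemma alpha_mem_Igt {n : ℕ} {i : ℕ+} (h : n < i) : alpha i ∈ Igt n :=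
  Submonoid.subset_closure ⟨i, h, rfl⟩

lemma alpha_mem_Iges {p i : ℕ+} (h : p ≤ i) : alpha i ∈ Iges p :=
  Submonoid.subset_closure ⟨i, h, rfl⟩

lemma Igt_antitone : Antitone Igt := fun _ _ h =>
  Submonoid.closure_le.2 <| by rintro _ ⟨i, hi, rfl⟩; exact alpha_mem_Igt (h.trans_lt hi)

lemma Iges_le_Igt {n : ℕ} {p : ℕ+} (h : n < p) : Iges p ≤ Igt n :=
  Submonoid.closure_le.2 <| by
    rintro _ ⟨i, hi, rfl⟩; exact alpha_mem_Igt (h.trans_le (PNat.coe_le_coe _ _ |>.2 hi))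

lemma exists_mem_Iges_alpha_pow_mul_eq {c p q : ℕ+} {r : ℕ} (hcp : c ≤ p) (hq : (q : ℕ) = p + r)
    {σ : IncM} (hσ : σ ∈ Iges p) : ∃ τ ∈ Iges q, alpha c ^ r * σ = τ * alpha c ^ r := by
  induction hσ using Submonoid.closure_induction with
  | mem _ hj =>
    obtain ⟨j, hj, rfl⟩ := hj
    let j' : ℕ+ := ⟨j + r, by positivity⟩
    refine ⟨alpha j', alpha_mem_Iges ?_, alpha_pow_mul_alpha (hcp.trans hj) rfl⟩
    rw [← PNat.coe_le_coe, hq]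
    exact Nat.add_le_add_right (PNat.coe_le_coe _ _ |>.2 hj) r
  | one => exact ⟨1, one_mem _, by rw [mul_one, one_mul]⟩
  | mul _ _ _ _ h₁ h₂ =>
    obtain ⟨τ₁, hτ₁, e₁⟩ := h₁
    obtain ⟨τ₂, hτ₂, e₂⟩ := h₂
    exact ⟨τ₁ * τ₂, mul_mem hτ₁ hτ₂, by rw [← mul_assoc, e₁, mul_assoc, e₂, mul_assoc]⟩

lemma extApply_zero (σ : IncM) : extApply σ 0 = 0 := rfl

lemma extApply_coe (σ : IncM) (p : ℕ+) : extApply σ p = σ.1 p := dif_pos p.pos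

lemma extApply_one (n : ℕ) : extApply 1 n = n := by
  rcases n.eq_zero_or_pos with rfl | hn
  · rfl
  · lift n to ℕ+ using hn
    rw [extApply_coe]
    rfl

lemma extApply_mul (σ τ : IncM) (n : ℕ) : extApply (σ * τ) n = extApply σ (extApply τ n) := by
  rcases n.eq_zero_or_pos with rfl | hn
  · rfl
  · lift n to ℕ+ using hn
    simp only [extApply_coe]
    rfl

lemma extApply_alpha (i : ℕ+) (n : ℕ) : extApply (alpha i) n = if n < i then n else n + 1 := by
  rcases n.eq_zero_or_pos with rfl | hn
  · simp [extApply_zero]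
  · lift n to ℕ+ using hn
    simp only [extApply_coe, alpha_apply, apply_ite PNat.val, PNat.coe_lt_coe, PNat.add_coe,
      PNat.one_coe]

lemma extApply_strictMono (σ : IncM) : StrictMono (extApply σ) := by
  intro a b hab
  lift b to ℕ+ using (Nat.zero_le a).trans_lt hab
  rcases a.eq_zero_or_pos with rfl | ha
  · simp [extApply_zero, extApply_coe]
  · lift a to ℕ+ using ha
    simpa [extApply_coe] using σ.strictMono (PNat.coe_lt_coe _ _ |>.1 hab)

lemma extApply_eq_of_le {σ : IncM} {m n : ℕ} (h : extApply σ n = n) (hmn : m ≤ n) :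
    extApply σ m = m := by
  have hle := (extApply_strictMono σ).add_le_nat (n - m) m
  have hge := (extApply_strictMono σ).id_le m
  rw [Nat.sub_add_cancel hmn, h] at hle
  exact le_antisymm (by omega) hge

/-- `α_k⁻¹ ∘ σ`, for `σ` fixing every `m < k` and moving `k`. -/
def alphaQuotFun (σ : IncM) (k : ℕ+) (m : ℕ+) : ℕ+ := if m < k then m else σ.1 m - 1

section AlphaQuot

variable {σ : IncM} {k : ℕ+}

lemma alphaQuotFun_of_lt {m : ℕ+} (hm : m < k) : alphaQuotFun σ k m = m := if_pos hm

lemma alphaQuotFun_add_one (hk : k < σ.1 k) {m : ℕ+} (hm : k ≤ m) :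
    (alphaQuotFun σ k m : ℕ) + 1 = σ.1 m := by
  have hkm : k < σ.1 m := hk.trans_le (σ.strictMono.monotone hm)
  have := PNat.coe_lt_coe _ _ |>.2 hkm
  rw [alphaQuotFun, if_neg (not_lt.2 hm), PNat.sub_coe, if_pos ((one_le : 1 ≤ k).trans_lt hkm),
    PNat.one_coe]
  omega

lemma alphaQuotFun_strictMono (hk : k < σ.1 k) : StrictMono (alphaQuotFun σ k) := by
  intro a b hab
  rw [← PNat.coe_lt_coe]
  by_cases hb : b < k
  · rwa [alphaQuotFun_of_lt (hab.trans hb), alphaQuotFun_of_lt hb, PNat.coe_lt_coe]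
  have h₁ := alphaQuotFun_add_one hk (not_lt.1 hb)
  by_cases ha : a < k
  · have h₂ := PNat.coe_lt_coe _ _ |>.2 (hk.trans_le (σ.strictMono.monotone (not_lt.1 hb)))
    rw [alphaQuotFun_of_lt ha]
    rw [← PNat.coe_lt_coe] at ha
    omega
  · have h₂ := alphaQuotFun_add_one hk (not_lt.1 ha)
    have h₃ := PNat.coe_lt_coe _ _ |>.2 (σ.strictMono hab)
    omega

lemma alphaQuotFun_mem (hk : k < σ.1 k) : alphaQuotFun σ k ∈ IncMonoid := by
  obtain ⟨l, N, hN⟩ := σ.2.2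
  refine ⟨alphaQuotFun_strictMono hk, l - 1, max N k, fun m hm => ?_⟩
  have h₁ := alphaQuotFun_add_one hk (le_of_max_le_right hm)
  have h₂ := hN m (le_of_max_le_left hm)
  have h₃ := PNat.coe_le_coe _ _ |>.2 ((alphaQuotFun_strictMono hk).le_apply (x := m))
  omega

lemma exists_eq_alpha_mul (hfix : ∀ j < (k : ℕ), extApply σ j = j) (hk : extApply σ k ≠ k) :
    ∃ τ : IncM, σ = alpha k * τ ∧ (∀ j < (k : ℕ), extApply τ j = j) ∧
      ∀ m : ℕ+, k ≤ m → (τ.1 m : ℕ) + 1 = σ.1 m := by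
  rw [extApply_coe] at hk
  have hσk : k < σ.1 k := (σ.le_apply k).lt_of_ne fun h => hk (by rw [← h])
  refine ⟨⟨_, alphaQuotFun_mem hσk⟩, Subtype.ext (funext fun m => ?_), fun j hj => ?_,
    fun m => alphaQuotFun_add_one hσk⟩
  · change σ.1 m = (alpha k).1 (alphaQuotFun σ k m)
    rw [alpha_apply]
    by_cases hm : m < k
    · rw [alphaQuotFun_of_lt hm, if_pos hm]
      exact PNat.coe_injective (by rw [← extApply_coe]; exact hfix m hm)
    · rw [not_lt] at hm
      rw [if_neg (not_lt.2 (hm.trans (alphaQuotFun_strictMono hσk).le_apply))]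
      exact PNat.coe_injective (by rw [PNat.add_coe, PNat.one_coe, alphaQuotFun_add_one hσk hm])
  · rcases j.eq_zero_or_pos with rfl | hj₀
    · rfl
    · lift j to ℕ+ using hj₀
      rw [extApply_coe]
      exact congrArg _ (alphaQuotFun_of_lt hj)

end AlphaQuot

lemma mem_Igt_of_extApply_eq {σ : IncM} {n : ℕ} (h : extApply σ n = n) : σ ∈ Igt n := by
  obtain ⟨l, N, hN⟩ := σ.2.2
  induction l generalizing σ n N with
  | zero =>
    suffices σ = 1 by rw [this]; exact one_mem _
    refine Subtype.ext (funext fun m => PNat.coe_injective ?_)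
    have hmax := hN (max m N) le_sup_right
    rw [add_zero, ← extApply_coe] at hmax
    rw [← extApply_coe]
    exact extApply_eq_of_le hmax (PNat.coe_le_coe _ _ |>.2 le_sup_left)
  | succ l ih =>
    have hex : ∃ j, extApply σ j ≠ j := ⟨N, by rw [extApply_coe, hN N le_rfl]; omega⟩
    have hk₀ : 0 < Nat.find hex := Nat.pos_of_ne_zero fun h0 => Nat.find_spec hex (h0 ▸ rfl)
    set k : ℕ+ := ⟨Nat.find hex, hk₀⟩
    have hnk : n < k := not_le.1 fun hkn => Nat.find_spec hex (extApply_eq_of_le h hkn)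
    obtain ⟨τ, hστ, hτ, hτσ⟩ := exists_eq_alpha_mul (k := k)
      (fun j hj => not_not.1 (Nat.find_min hex hj)) (Nat.find_spec hex)
    have hτN : ∀ m : ℕ+, max N k ≤ m → (τ.1 m : ℕ) = m + l := fun m hm => by
      have h₁ := hN m (le_of_max_le_left hm)
      have h₂ := hτσ m (le_of_max_le_right hm)
      omega
    have hτk : extApply τ (k - 1) = k - 1 := hτ _ (Nat.sub_lt hk₀ one_pos)
    rw [hστ]
    exact mul_mem (alpha_mem_Igt hnk)
      (Igt_antitone (Nat.le_sub_one_of_lt hnk) (ih hτk (max N k) hτN))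

lemma mem_Igt_zero (σ : IncM) : σ ∈ Igt 0 := mem_Igt_of_extApply_eq (extApply_zero σ)

theorem IncM.induction_on_alpha {P : IncM → Prop} (one : P 1) (generator : ∀ i, P (alpha i))
    (mul : ∀ σ τ, P σ → P τ → P (σ * τ)) (σ : IncM) : P σ := by
  induction mem_Igt_zero σ using Submonoid.closure_induction with
  | mem _ h => obtain ⟨i, -, rfl⟩ := h; exact generator i
  | one => exact one
  | mul σ τ _ _ hσ hτ => exact mul σ τ hσ hτ

def IsCyclicallySmooth (k : Type*) [Field k] (M : Type*) [AddCommGroup M]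
    [Module (IncAlg k) M] : Prop :=
  ∀ x : M, ∃ N, (Submodule.span (IncAlg k) {x}).toAddSubgroup ≤ invGrp k M (Igt N)

section Module

variable {k : Type*} [Field k] {M : Type*} [AddCommGroup M] [Module (IncAlg k) M]

lemma ofInc_mul_smul (σ τ : IncM) (x : M) :
    ofInc k (σ * τ) • x = ofInc k σ • ofInc k τ • x := by
  rw [ofInc, map_mul, mul_smul]

lemma ofInc_one_smul (x : M) : ofInc k 1 • x = x := by
  rw [ofInc, map_one, one_smul]

lemma mem_invGrp_closure {S : Set IncM} {x : M} :
    x ∈ invGrp k M (Submonoid.closure S) ↔ ∀ σ ∈ S, ofInc k σ • x = x := by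
  refine ⟨fun h σ hσ => h σ (Submonoid.subset_closure hσ), fun h σ hσ => ?_⟩
  induction hσ using Submonoid.closure_induction with
  | mem σ hσ => exact h σ hσ
  | one => exact ofInc_one_smul x
  | mul σ τ _ _ hσ hτ => rw [ofInc_mul_smul, hτ, hσ]

lemma mem_invGrp_Igt {n : ℕ} {x : M} :
    x ∈ invGrp k M (Igt n) ↔ ∀ i : ℕ+, n < i → ofInc k (alpha i) • x = x := by
  rw [Igt, mem_invGrp_closure]
  exact ⟨fun h i hi => h _ ⟨i, hi, rfl⟩, by rintro h _ ⟨i, hi, rfl⟩; exact h i hi⟩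

lemma invGrp_anti {S T : Submonoid IncM} (h : S ≤ T) : invGrp k M T ≤ invGrp k M S :=
  fun _ hx σ hσ => hx σ (h hσ)

lemma smul_sub_mem_augGrp {p : ℕ+} {σ : IncM} (hσ : σ ∈ Iges p) (y : M) :
    ofInc k σ • y - y ∈ augGrp k M p :=
  AddSubgroup.subset_closure ⟨σ, hσ, y, rfl⟩

lemma isCyclicallySmooth_of_isSmoothMod (hsm : IsSmoothMod k M)
    (hlf : ∀ x : M, ∃ (m : ℕ) (v : Fin m → M),
      ∀ y ∈ Submodule.span (IncAlg k) ({x} : Set M),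
        ∃ c : Fin m → k, y = ∑ i, algebraMap k (IncAlg k) (c i) • v i) :
    IsCyclicallySmooth k M := by
  intro x
  obtain ⟨m, v, hv⟩ := hlf x
  choose N hN using fun i => hsm (v i)
  refine ⟨Finset.univ.sup N, fun z hz σ hσ => ?_⟩
  obtain ⟨c, rfl⟩ := hv z hz
  rw [Finset.smul_sum]
  refine Finset.sum_congr rfl fun i _ => ?_
  rw [smul_smul, ← Algebra.commutes, mul_smul,
    hN i σ (Igt_antitone (Finset.le_sup (Finset.mem_univ i)) hσ)]

lemma alpha_pow_smul_smul_eq {c : ℕ+} {N R : ℕ} (hR : N < c + R) {y : M}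
    (hy : ofInc k (alpha c ^ R) • y ∈ invGrp k M (Igt N)) {σ : IncM} (hσ : σ ∈ Iges c) :
    ofInc k (alpha c ^ R) • ofInc k σ • y = ofInc k (alpha c ^ R) • y := by
  obtain ⟨τ, hτ, he⟩ :=
    exists_mem_Iges_alpha_pow_mul_eq le_rfl (q := ⟨c + R, by positivity⟩) rfl hσ
  rw [← ofInc_mul_smul, he, ofInc_mul_smul]
  exact hy τ (Iges_le_Igt hR hτ)

lemma eventually_alpha_pow_smul_eq_zero (hM : IsCyclicallySmooth k M) {c : ℕ+} {u : M}
    (hu : u ∈ augGrp k M c) :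
    ∀ᶠ R in Filter.atTop, ofInc k (alpha c ^ R) • u = 0 := by
  induction hu using AddSubgroup.closure_induction with
  | mem _ hu =>
    obtain ⟨σ, hσ, y, rfl⟩ := hu
    obtain ⟨N, hN⟩ := hM y
    filter_upwards [Filter.eventually_gt_atTop N] with R hR
    rw [smul_sub, alpha_pow_smul_smul_eq (by omega)
      (hN (Submodule.smul_mem _ _ (Submodule.mem_span_singleton_self y))) hσ, sub_self]
  | zero => exact Filter.Eventually.of_forall fun _ => smul_zero _
  | add _ _ _ _ h₁ h₂ =>
    filter_upwards [h₁, h₂] with R h₁ h₂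
    rw [smul_add, h₁, h₂, add_zero]
  | neg _ _ h =>
    filter_upwards [h] with R h
    rw [smul_neg, h, neg_zero]

lemma disjoint_invGrp_augGrp (hM : IsCyclicallySmooth k M) {n : ℕ} {p : ℕ+} (h : n < p) :
    Disjoint (invGrp k M (Igt n)) (augGrp k M p) := by
  refine AddSubgroup.disjoint_def.2 fun {x} hx hx' => ?_
  obtain ⟨R, hR⟩ := (eventually_alpha_pow_smul_eq_zero hM hx').exists
  rwa [hx _ (pow_mem (alpha_mem_Igt h) R)] at hR

lemma alpha_pow_smul_mem_invGrp {n N R : ℕ} (hR : N ≤ n + R) {y : M}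
    (hy : ofInc k (alpha n.succPNat ^ R) • y ∈ invGrp k M (Igt N)) :
    ofInc k (alpha n.succPNat ^ R) • y ∈ invGrp k M (Igt n) := by
  refine mem_invGrp_Igt.2 fun j hj => ?_
  by_cases hjN : N < j
  · exact hy _ (alpha_mem_Igt hjN)
  have hc : n.succPNat ≤ j := PNat.coe_le_coe _ _ |>.1 hj
  let q : ℕ+ := ⟨n + 1 + R, by positivity⟩
  have hq : alpha j * alpha n.succPNat ^ R = alpha q * alpha n.succPNat ^ R := by
    rw [alpha_mul_alpha_pow hc (show (j : ℕ) ≤ n + 1 + R by omega),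
      alpha_mul_alpha_pow (PNat.coe_le_coe _ _ |>.1 (Nat.le_add_right _ _)) le_rfl]
  rw [← ofInc_mul_smul, hq, ofInc_mul_smul]
  exact hy _ (alpha_mem_Igt (show N < n + 1 + R by omega))

lemma grPiece_zero : grPiece k M 0 = invGrp k M (Igt 0) := by
  simp [grPiece]

lemma grPiece_coe (p : ℕ+) : grPiece k M p = invGrp k M (Igt p) ⊓ augGrp k M p := by
  rw [grPiece, dif_pos p.pos]
  rfl

lemma grPiece_le_invGrp (n : ℕ) : grPiece k M n ≤ invGrp k M (Igt n) :=
  inf_le_left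

lemma iSup_grPiece_eq_top (hM : IsCyclicallySmooth k M) : ⨆ n, grPiece k M n = ⊤ := by
  refine eq_top_iff.2 fun x _ => ?_
  obtain ⟨N, hN⟩ := hM x
  suffices ∀ n, ∀ z ∈ Submodule.span (IncAlg k) {x}, z ∈ invGrp k M (Igt n) →
      z ∈ ⨆ n, grPiece k M n from
    this N x (Submodule.mem_span_singleton_self x) (hN (Submodule.mem_span_singleton_self x))
  intro n
  induction n with
  | zero => exact fun z _ hz => le_iSup (grPiece k M) 0 (by rwa [grPiece_zero])
  | succ n ih =>
    intro z hzx hz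
    set e := ofInc k (alpha n.succPNat ^ (N - n)) • z
    have hex : e ∈ Submodule.span (IncAlg k) {x} := Submodule.smul_mem _ _ hzx
    have he : e ∈ invGrp k M (Igt n) := alpha_pow_smul_mem_invGrp (by omega) (hN hex)
    have hze : z - e ∈ grPiece k M (n + 1) := by
      rw [show n + 1 = (n.succPNat : ℕ) from rfl, grPiece_coe]
      refine AddSubgroup.mem_inf.2 ⟨sub_mem hz (invGrp_anti (Igt_antitone n.le_succ) he), ?_⟩
      rw [← neg_sub]
      exact neg_mem (smul_sub_mem_augGrp (pow_mem (alpha_mem_Iges le_rfl) _) z)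
    rw [← add_sub_cancel e z]
    exact add_mem (ih e hex he) (le_iSup (grPiece k M) (n + 1) hze)

lemma disjoint_grPiece_iSup_lt (hM : IsCyclicallySmooth k M) (n : ℕ) :
    Disjoint (grPiece k M n) (⨆ m < n, grPiece k M m) := by
  rcases n with _ | n
  · simp
  · rw [show n + 1 = (n.succPNat : ℕ) from rfl, grPiece_coe]
    refine (disjoint_invGrp_augGrp hM n.lt_succ_self).symm.mono inf_le_right ?_
    exact iSup₂_le fun m hm =>
      (grPiece_le_invGrp m).trans (invGrp_anti (Igt_antitone (Nat.le_of_lt_succ hm)))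

lemma alpha_smul_mem_invGrp (i : ℕ+) {n : ℕ} {x : M} (hx : x ∈ invGrp k M (Igt n)) :
    ofInc k (alpha i) • x ∈ invGrp k M (Igt (extApply (alpha i) n)) := by
  rw [extApply_alpha]
  split_ifs with h
  · rwa [hx _ (alpha_mem_Igt h)]
  refine mem_invGrp_Igt.2 fun j hj => ?_
  obtain ⟨j, rfl⟩ := PNat.exists_eq_succ_of_ne_one (n := j) (by rintro rfl; simp at hj)
  rw [PNat.add_coe, PNat.one_coe] at hj
  rw [← ofInc_mul_smul, alpha_succ_mul_alpha (PNat.coe_le_coe _ _ |>.1 (by omega)),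
    ofInc_mul_smul, hx _ (alpha_mem_Igt (by omega))]

lemma alpha_smul_mem_augGrp (i : ℕ+) {p : ℕ+} {x : M} (hx : x ∈ augGrp k M p) :
    ofInc k (alpha i) • x ∈ augGrp k M ((alpha i).1 p) := by
  refine (AddSubgroup.closure_le (K := (augGrp k M _).comap
    (DistribSMul.toAddMonoidHom M (ofInc k (alpha i))))).2 ?_ hx
  rintro _ ⟨τ, hτ, y, rfl⟩
  change ofInc k (alpha i) • (ofInc k τ • y - y) ∈ augGrp k M _
  rw [alpha_apply]
  split_ifs with h
  · have hi : alpha i ∈ Iges p := alpha_mem_Iges h.le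
    rw [smul_sub, ← ofInc_mul_smul, ← sub_sub_sub_cancel_right _ _ y]
    exact sub_mem (smul_sub_mem_augGrp (mul_mem hi hτ) y) (smul_sub_mem_augGrp hi y)
  · obtain ⟨τ', hτ', he⟩ :=
      exists_mem_Iges_alpha_pow_mul_eq (r := 1) (not_lt.1 h) (q := p + 1) (by simp) hτ
    rw [pow_one] at he
    rw [smul_sub, ← ofInc_mul_smul, he, ofInc_mul_smul]
    exact smul_sub_mem_augGrp hτ' _

lemma smul_mem_invGrp_extApply (σ : IncM) {n : ℕ} {x : M} (hx : x ∈ invGrp k M (Igt n)) :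
    ofInc k σ • x ∈ invGrp k M (Igt (extApply σ n)) := by
  induction σ using IncM.induction_on_alpha generalizing n x with
  | one => rwa [ofInc_one_smul, extApply_one]
  | generator i => exact alpha_smul_mem_invGrp i hx
  | mul σ τ hσ hτ => rw [ofInc_mul_smul, extApply_mul]; exact hσ (hτ hx)

lemma smul_mem_augGrp_apply (σ : IncM) {p : ℕ+} {x : M} (hx : x ∈ augGrp k M p) :
    ofInc k σ • x ∈ augGrp k M (σ.1 p) := by
  induction σ using IncM.induction_on_alpha generalizing p x with
  | one => rwa [ofInc_one_smul]
  | generator i => exact alpha_smul_mem_augGrp i hx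
  | mul σ τ hσ hτ => rw [ofInc_mul_smul]; exact hσ (hτ hx)

lemma smul_mem_grPiece (σ : IncM) {n : ℕ} {x : M} (hx : x ∈ grPiece k M n) :
    ofInc k σ • x ∈ grPiece k M (extApply σ n) := by
  rcases n.eq_zero_or_pos with rfl | hn
  · rw [extApply_zero, grPiece_le_invGrp 0 hx σ (mem_Igt_zero σ)]
    exact hx
  · lift n to ℕ+ using hn
    rw [grPiece_coe] at hx
    rw [extApply_coe, grPiece_coe]
    obtain ⟨hi, ha⟩ := AddSubgroup.mem_inf.1 hx
    exact AddSubgroup.mem_inf.2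
      ⟨extApply_coe σ n ▸ smul_mem_invGrp_extApply σ hi, smul_mem_augGrp_apply σ ha⟩

lemma smul_eq_self_of_mem_grPiece {σ : IncM} {n : ℕ} (h : extApply σ n = n) {x : M}
    (hx : x ∈ grPiece k M n) : ofInc k σ • x = x :=
  grPiece_le_invGrp n hx σ (mem_Igt_of_extApply_eq h)

lemma isInternal_grPiece (hM : IsCyclicallySmooth k M) : DirectSum.IsInternal (grPiece k M) :=
  DirectSum.isInternal_addSubgroup_of_disjoint_iSup_lt (disjoint_grPiece_iSup_lt hM)
    (iSup_grPiece_eq_top hM)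

end Module

/-- The canonical grading: a smooth, locally finite length
`k[I]`-module `M` is the internal direct sum of the pieces
`G_n(M) = M^{I_{>n}} ∩ 𝔞_n M`, each `σ ∈ I` maps `G_n(M)` into `G_{σ(n)}(M)`, and
`σ` acts as the identity on `G_n(M)` whenever `σ(n) = n`. -/
theorem canonical_grading (k : Type*) [Field k]
    (M : Type*) [AddCommGroup M] [Module (IncAlg k) M]
    (hsm : IsSmoothMod k M)
    (hlf : ∀ x : M, ∃ (m : ℕ) (v : Fin m → M),
      ∀ y ∈ Submodule.span (IncAlg k) ({x} : Set M),
        ∃ c : Fin m → k, y = ∑ i, algebraMap k (IncAlg k) (c i) • v i) :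
    DirectSum.IsInternal (fun n : ℕ => grPiece k M n) ∧
    (∀ (σ : IncM) (n : ℕ), ∀ x ∈ grPiece k M n,
      ofInc k σ • x ∈ grPiece k M (extApply σ n)) ∧
    (∀ (σ : IncM) (n : ℕ), extApply σ n = n →
      ∀ x ∈ grPiece k M n, ofInc k σ • x = x) :=
  ⟨isInternal_grPiece (isCyclicallySmooth_of_isSmoothMod hsm hlf),
    fun σ _ _ hx => smul_mem_grPiece σ hx, fun _ _ h _ hx => smul_eq_self_of_mem_grPiece h hx⟩

end
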